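/- Let (π_k)_{k ∈ ℕ} be a sequence of measures on a measurable space E, let B ⊆ E be measurable with 0 < π_k(B) < ∞ for every k, and let A₁, …, A_n ⊆ B be pairwise disjoint measurable sets with π_k(A_i) > 0 for every k and every i ∈ {1, …, n}. Suppose that for each i the limit ν_i := lim_{k → ∞} π_k(A_i)/π_k(B) exists, lies in [0, 1), and that Σ_{i=1}^n ν_i = 1. Then for any a₁, …, a_n ≥ 0 with Σ_{i=1}^n a_i = 1, one has lim_{k → ∞} d_TV(Σ_{i=1}^n a_i π_k^{A_i}, π_k^B) = (1/2) Σ_{i=1}^n |a_i − ν_i|. -/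

import Mathlib

/-! With `p_i = π^B(A_i)` and `U = ⋃ A_i`, the law of total probability gives
`Σ a_i π^{A_i}(F) - π^B(F) = Σ (a_i - p_i) π^{A_i}(F) - π^B(F \ U)`. As `π^{A_i}(F) ∈ [0, 1]` and
`0 ≤ π^B(F \ U) ≤ π^B(Uᶜ) = 1 - Σ p_i = Σ (a_i - p_i)`, its absolute value is at most
`Σ (a_i - p_i)⁺`, attained at `F = ⋃_{a_i ≥ p_i} A_i`. So for each `k` the distance equals
`Σ (a_i - p_i)⁺`, which is continuous in `p`; in the limit `Σ (a_i - ν_i) = 0`, so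
`Σ (a_i - ν_i)⁺ = ½ Σ |a_i - ν_i|`. -/

open MeasureTheory Finset Filter Topology

/-- The value on the set `S` of the measure `π` conditioned on `A`:
`π^A(S) = π(S ∩ A) / π(A)`. -/
noncomputable def condMeas {E : Type*} [MeasurableSpace E]
    (π : Measure E) (A S : Set E) : ℝ :=
  (π (S ∩ A)).toReal / (π A).toReal

open ProbabilityTheory
open scoped ENNReal

lemma mul_le_posPart {c t : ℝ} (ht0 : 0 ≤ t) (ht1 : t ≤ 1) : c * t ≤ c⁺ := by
  rcases le_total 0 c with hc | hc
  · exact (mul_le_of_le_one_right hc ht1).trans (le_posPart c)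
  · exact (mul_nonpos_of_nonpos_of_nonneg hc ht0).trans (posPart_nonneg c)

lemma abs_sum_mul_sub_le_sum_posPart {ι : Type*} (s : Finset ι) {c t : ι → ℝ} {x : ℝ}
    (ht0 : ∀ i ∈ s, 0 ≤ t i) (ht1 : ∀ i ∈ s, t i ≤ 1) (hx0 : 0 ≤ x)
    (hx : x ≤ ∑ i ∈ s, c i) :
    |∑ i ∈ s, c i * t i - x| ≤ ∑ i ∈ s, (c i)⁺ := by
  rw [abs_sub_le_iff]
  constructor
  · have : ∑ i ∈ s, c i * t i ≤ ∑ i ∈ s, (c i)⁺ :=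
      sum_le_sum fun i hi => mul_le_posPart (ht0 i hi) (ht1 i hi)
    linarith
  · have : ∑ i ∈ s, c i * (1 - t i) ≤ ∑ i ∈ s, (c i)⁺ :=
      sum_le_sum fun i hi => mul_le_posPart (sub_nonneg.2 (ht1 i hi)) (by linarith [ht0 i hi])
    simp only [mul_sub, mul_one, sum_sub_distrib] at this
    linarith

lemma sum_posPart_eq_half_sum_abs {ι : Type*} (s : Finset ι) {f : ι → ℝ}
    (hf : ∑ i ∈ s, f i = 0) : ∑ i ∈ s, (f i)⁺ = (1 / 2) * ∑ i ∈ s, |f i| := by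
  have habs : ∑ i ∈ s, |f i| = ∑ i ∈ s, (f i)⁺ + ∑ i ∈ s, (f i)⁻ := by
    simp only [← posPart_add_negPart, sum_add_distrib]
  have hsub : ∑ i ∈ s, (f i)⁺ - ∑ i ∈ s, (f i)⁻ = ∑ i ∈ s, f i := by
    simp only [← sum_sub_distrib, posPart_sub_negPart]
  linarith

lemma measureReal_eq_sum_inter_add_diff_iUnion {E ι : Type*} [MeasurableSpace E] [Fintype ι]
    (μ : Measure E) [IsFiniteMeasure μ] {A : ι → Set E} (hAmeas : ∀ i, MeasurableSet (A i))
    (hAdisj : Pairwise (Function.onFun Disjoint A)) {F : Set E} (hF : MeasurableSet F) :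
    μ.real F = ∑ i, μ.real (F ∩ A i) + μ.real (F \ ⋃ i, A i) := by
  rw [← measureReal_iUnion_fintype
      (fun i j hij => (hAdisj hij).mono Set.inter_subset_right Set.inter_subset_right)
      (fun i => hF.inter (hAmeas i)),
    ← Set.inter_iUnion]
  exact (measureReal_inter_add_sdiff (MeasurableSet.iUnion hAmeas)).symm

section CondMeas

variable {E : Type*} [MeasurableSpace E] {π : Measure E} {A B S : Set E}

lemma condMeas_eq_measureReal_cond (hA : MeasurableSet A) (S : Set E) :
    condMeas π A S = (π[|A]).real S := by
  rw [condMeas, measureReal_def, cond_apply hA, ENNReal.toReal_mul, ENNReal.toReal_inv,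
    Set.inter_comm, div_eq_inv_mul]

lemma condMeas_of_subset (h : S ⊆ A) : condMeas π A S = π.real S / π.real A := by
  rw [condMeas, Set.inter_eq_left.mpr h]
  rfl

lemma condMeas_nonneg : 0 ≤ condMeas π A S := by
  unfold condMeas
  positivity

lemma condMeas_le_one : condMeas π A S ≤ 1 := by
  rcases eq_or_ne (π A) ∞ with h | h
  · simp [condMeas, h]
  · exact div_le_one_of_le₀ (ENNReal.toReal_mono h (measure_mono Set.inter_subset_right))
      ENNReal.toReal_nonneg

lemma condMeas_univ (h0 : π A ≠ 0) (hfin : π A ≠ ∞) : condMeas π A Set.univ = 1 := by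
  rw [condMeas, Set.univ_inter, div_self (ENNReal.toReal_ne_zero.mpr ⟨h0, hfin⟩)]

lemma condMeas_inter_of_subset (hAB : A ⊆ B) (F : Set E) :
    condMeas π B (F ∩ A) = condMeas π B A * condMeas π A F := by
  rw [condMeas_of_subset (Set.inter_subset_right.trans hAB), condMeas_of_subset hAB, condMeas,
    ← measureReal_def, ← measureReal_def]
  rcases eq_or_ne (π.real A) 0 with h | h
  · rcases (ENNReal.toReal_eq_zero_iff _).mp h with h0 | htop
    · simp [measureReal_def, measure_mono_null Set.inter_subset_right h0]
    · simp [measureReal_def, top_unique (htop ▸ measure_mono hAB)]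
  · field_simp

lemma condMeas_biUnion_eq_indicator {ι : Type*} {A : ι → Set E}
    (hAdisj : Pairwise (Function.onFun Disjoint A)) (s : Set ι) {i : ι}
    (h0 : π (A i) ≠ 0) (hfin : π (A i) ≠ ∞) :
    condMeas π (A i) (⋃ j ∈ s, A j) = s.indicator 1 i := by
  by_cases hi : i ∈ s
  · rw [Set.indicator_of_mem hi, Pi.one_apply, ← condMeas_univ h0 hfin, condMeas, condMeas,
      Set.univ_inter, Set.inter_eq_right.mpr (Set.subset_biUnion_of_mem hi)]
  · have hempty : (⋃ j ∈ s, A j) ∩ A i = ∅ := Set.disjoint_iff_inter_eq_empty.mp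
      (Set.disjoint_iUnion₂_left.mpr fun j hj => hAdisj (ne_of_mem_of_not_mem hj hi))
    simp [condMeas, hempty, hi]

end CondMeas

section Mixture

variable {E ι : Type*} [MeasurableSpace E] [Fintype ι] {π : Measure E} {B : Set E}
  {A : ι → Set E}

lemma condMeas_eq_sum_mul_add_sdiff (hB : MeasurableSet B) (hB0 : π B ≠ 0) (hBfin : π B ≠ ∞)
    (hAmeas : ∀ i, MeasurableSet (A i)) (hAB : ∀ i, A i ⊆ B)
    (hAdisj : Pairwise (Function.onFun Disjoint A)) {F : Set E} (hF : MeasurableSet F) :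
    condMeas π B F
      = ∑ i, condMeas π B (A i) * condMeas π (A i) F + condMeas π B (F \ ⋃ i, A i) := by
  have := cond_isProbabilityMeasure_of_finite hB0 hBfin
  simp only [← condMeas_inter_of_subset (hAB _)]
  simp only [condMeas_eq_measureReal_cond hB]
  exact measureReal_eq_sum_inter_add_diff_iUnion _ hAmeas hAdisj hF

lemma sum_mul_condMeas_biUnion_nonneg_eq_sum_posPart (hAdisj : Pairwise (Function.onFun Disjoint A))
    (hA0 : ∀ i, π (A i) ≠ 0) (hAfin : ∀ i, π (A i) ≠ ∞) (c : ι → ℝ) :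
    ∑ i, c i * condMeas π (A i) (⋃ j ∈ {j | 0 ≤ c j}, A j) = ∑ i, (c i)⁺ := by
  refine sum_congr rfl fun i _ => ?_
  rw [condMeas_biUnion_eq_indicator hAdisj _ (hA0 i) (hAfin i)]
  by_cases hi : 0 ≤ c i
  · simp [hi]
  · simp [hi, posPart_eq_zero.2 (le_of_not_ge hi)]

theorem iSup_abs_sum_condMeas_sub_condMeas (hB : MeasurableSet B) (hB0 : π B ≠ 0)
    (hBfin : π B ≠ ∞) (hAmeas : ∀ i, MeasurableSet (A i)) (hAB : ∀ i, A i ⊆ B)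
    (hAdisj : Pairwise (Function.onFun Disjoint A)) (hA0 : ∀ i, π (A i) ≠ 0)
    {a : ι → ℝ} (ha : ∑ i, a i = 1) :
    ⨆ F : {F : Set E // MeasurableSet F},
        |∑ i, a i * condMeas π (A i) F.1 - condMeas π B F.1|
      = ∑ i, (a i - condMeas π B (A i))⁺ := by
  have hAfin : ∀ i, π (A i) ≠ ∞ := fun i => ne_top_of_le_ne_top hBfin (measure_mono (hAB i))
  set U := ⋃ i, A i
  set c : ι → ℝ := fun i => a i - condMeas π B (A i)
  have hdiff : ∀ F, MeasurableSet F → ∑ i, a i * condMeas π (A i) F - condMeas π B F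
      = ∑ i, c i * condMeas π (A i) F - condMeas π B (F \ U) := by
    intro F hF
    rw [condMeas_eq_sum_mul_add_sdiff hB hB0 hBfin hAmeas hAB hAdisj hF]
    simp only [c, sub_mul, sum_sub_distrib]
    ring
  have hrest : condMeas π B (Set.univ \ U) = ∑ i, c i := by
    have h := hdiff Set.univ MeasurableSet.univ
    simp only [condMeas_univ hB0 hBfin, condMeas_univ (hA0 _) (hAfin _), mul_one, ha] at h
    linarith
  have hbound : ∀ F : {F : Set E // MeasurableSet F},
      |∑ i, a i * condMeas π (A i) F.1 - condMeas π B F.1| ≤ ∑ i, (c i)⁺ := by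
    rintro ⟨F, hF⟩
    rw [hdiff F hF]
    refine abs_sum_mul_sub_le_sum_posPart _ (fun i _ => condMeas_nonneg)
      (fun i _ => condMeas_le_one) condMeas_nonneg (hrest ▸ ?_)
    have := cond_isProbabilityMeasure_of_finite hB0 hBfin
    simp only [condMeas_eq_measureReal_cond hB]
    exact measureReal_mono (Set.sdiff_subset_sdiff_left (Set.subset_univ F))
  set F₁ := ⋃ i ∈ {i | 0 ≤ c i}, A i
  have hF₁ : MeasurableSet F₁ := MeasurableSet.biUnion (Set.to_countable _) fun i _ => hAmeas i
  have hvalue : ∑ i, a i * condMeas π (A i) F₁ - condMeas π B F₁ = ∑ i, (c i)⁺ := by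
    have hF₁U : F₁ \ U = ∅ :=
      Set.sdiff_eq_empty.mpr (Set.iUnion₂_subset fun i _ => Set.subset_iUnion A i)
    rw [hdiff _ hF₁, hF₁U, sum_mul_condMeas_biUnion_nonneg_eq_sum_posPart hAdisj hA0 hAfin,
      show condMeas π B ∅ = 0 by simp [condMeas], sub_zero]
  change _ = ∑ i, (c i)⁺
  exact IsGreatest.csSup_eq ⟨⟨⟨F₁, hF₁⟩, by
    simp only [hvalue, abs_of_nonneg (sum_nonneg fun i _ => posPart_nonneg (c i))]⟩,
    Set.forall_mem_range.2 hbound⟩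

end Mixture

theorem dTV_mixture_cond_tendsto_of_sum_one_general {E : Type*} [MeasurableSpace E]
    (π : ℕ → Measure E) (B : Set E) (hB : MeasurableSet B)
    (hBpos : ∀ k, 0 < π k B) (hBfin : ∀ k, π k B < ⊤)
    (n : ℕ) (A : Fin n → Set E)
    (hAmeas : ∀ i, MeasurableSet (A i))
    (hAB : ∀ i, A i ⊆ B)
    (hAdisj : Pairwise (Function.onFun Disjoint A))
    (hApos : ∀ k i, 0 < π k (A i))
    (ν : Fin n → ℝ)
    (hν : ∀ i, Tendsto (fun k => (π k (A i)).toReal / (π k B).toReal)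
      atTop (𝓝 (ν i)))
    (hνsum : ∑ i, ν i = 1)
    (a : Fin n → ℝ) (hasum : ∑ i, a i = 1) :
    Tendsto (fun k =>
        ⨆ F : {F : Set E // MeasurableSet F},
          |(∑ i, a i * condMeas (π k) (A i) F.1) - condMeas (π k) B F.1|)
      atTop
      (𝓝 ((1 / 2) * ∑ i, |a i - ν i|)) := by
  have hp : ∀ i, Tendsto (fun k => condMeas (π k) B (A i)) atTop (𝓝 (ν i)) := fun i =>
    (hν i).congr fun k => (condMeas_of_subset (hAB i)).symm
  have hsum : ∑ i, (a i - ν i) = 0 := by rw [sum_sub_distrib, hasum, hνsum, sub_self]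
  rw [← sum_posPart_eq_half_sum_abs _ hsum]
  refine (tendsto_finsetSum _ fun i _ =>
    continuous_posPart.continuousAt.tendsto.comp (tendsto_const_nhds.sub (hp i))).congr
      fun k => ?_
  exact (iSup_abs_sum_condMeas_sub_condMeas hB (hBpos k).ne' (hBfin k).ne hAmeas hAB hAdisj
    (fun i => (hApos k i).ne') hasum).symm

/-- If `π_k(A_i)/π_k(B) → ν_i ∈ [0,1)` for pairwise disjoint measurable sets
`A_i ⊆ B`, with `Σᵢ νᵢ = 1`, then the total variation distance between the mixture
`Σᵢ aᵢ π_k^{Aᵢ}` and `π_k^B` converges to `(1/2) Σᵢ |aᵢ − νᵢ|`. -/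
theorem dTV_mixture_cond_tendsto_of_sum_one {E : Type*} [MeasurableSpace E]
    (π : ℕ → Measure E) (B : Set E) (hB : MeasurableSet B)
    (hBpos : ∀ k, 0 < π k B) (hBfin : ∀ k, π k B < ⊤)
    (n : ℕ) (A : Fin n → Set E)
    (hAmeas : ∀ i, MeasurableSet (A i))
    (hAB : ∀ i, A i ⊆ B)
    (hAdisj : Pairwise (Function.onFun Disjoint A))
    (hApos : ∀ k i, 0 < π k (A i))
    (ν : Fin n → ℝ)
    (hν : ∀ i, Tendsto (fun k => (π k (A i)).toReal / (π k B).toReal)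
      atTop (𝓝 (ν i)))
    (hνIco : ∀ i, ν i ∈ Set.Ico (0 : ℝ) 1)
    (hνsum : ∑ i, ν i = 1)
    (a : Fin n → ℝ) (ha : ∀ i, 0 ≤ a i) (hasum : ∑ i, a i = 1) :
    Tendsto (fun k =>
        ⨆ F : {F : Set E // MeasurableSet F},
          |(∑ i, a i * condMeas (π k) (A i) F.1) - condMeas (π k) B F.1|)
      atTop
      (𝓝 ((1 / 2) * ∑ i, |a i - ν i|)) :=
  dTV_mixture_cond_tendsto_of_sum_one_general π B hB hBpos hBfin n A hAmeas hAB hAdisj hApos ν hν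
    hνsum a hasum
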